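/- The solutions in even integers 4 ≤ q₀ < q₁ < q₂ and even p ≥ 4 with q₀ ∣ p, q₁ ∣ p, and q₂ ∣ p to the equation 1/q₀ + 1/q₁ + 1/q₂ + 1/p = 1/2 (as rationals) are exactly (q₀,q₁,q₂,p) ∈ {(4,6,14,84), (4,6,16,48), (4,6,18,36), (4,6,24,24), (4,8,10,40), (4,8,12,24), (4,8,16,16)}. -/

import Mathlib

/-!
Since `q₀ < q₁ < q₂ ≤ p`, the four unit fractions are dominated by the first one, so `q₀ < 8`;
subtracting `1/q₀ ≤ 1/4` and arguing the same way gives `q₁ < 12`, and then `q₂ ≤ 24`.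
Evenness leaves finitely many triples `(q₀, q₁, q₂)`, and for each of them the cleared-denominator
equation is linear in `p`, so `p` is determined and `q₂ ∣ p` discards the rest.
-/

lemma one_div_natCast_lt_one_div_natCast {m n : ℕ} (hm : 0 < m) (hn : 0 < n) :
    (1 : ℚ) / n < 1 / m ↔ m < n := by
  rw [one_div_lt_one_div (by positivity) (by positivity)]
  exact Nat.cast_lt

lemma one_div_natCast_le_one_div_natCast {m n : ℕ} (hm : 0 < m) (hn : 0 < n) :
    (1 : ℚ) / n ≤ 1 / m ↔ m ≤ n := by
  rw [one_div_le_one_div (by positivity) (by positivity)]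
  exact Nat.cast_le

lemma one_div_add_four_eq_half_iff {a b c d : ℕ} (ha : a ≠ 0) (hb : b ≠ 0) (hc : c ≠ 0)
    (hd : d ≠ 0) :
    (1 : ℚ) / a + 1 / b + 1 / c + 1 / d = 1 / 2 ↔
      2 * (b * c * d + a * c * d + a * b * d + a * b * c) = a * b * c * d := by
  rw [← Nat.cast_inj (R := ℚ)]
  push_cast
  field_simp

lemma bounds_of_one_div_add_four_eq_half {q₀ q₁ q₂ p : ℕ} (hq₀ : 4 ≤ q₀) (hq₁ : 6 ≤ q₁)
    (h₀₁ : q₀ < q₁) (h₁₂ : q₁ < q₂) (h₂p : q₂ ≤ p)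
    (h : (1 : ℚ) / q₀ + 1 / q₁ + 1 / q₂ + 1 / p = 1 / 2) :
    q₀ < 8 ∧ q₁ < 12 ∧ q₂ ≤ 24 := by
  have i₀₁ := (one_div_natCast_lt_one_div_natCast (by omega) (by omega)).2 h₀₁
  have i₁₂ := (one_div_natCast_lt_one_div_natCast (by omega) (by omega)).2 h₁₂
  have i₂p := (one_div_natCast_le_one_div_natCast (by omega) (by omega)).2 h₂p
  have i₀ := (one_div_natCast_le_one_div_natCast (by norm_num) (by omega)).2 hq₀
  have i₁ := (one_div_natCast_le_one_div_natCast (by norm_num) (by omega)).2 hq₁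
  push_cast at i₀ i₁
  refine ⟨?_, ?_, ?_⟩
  · refine (one_div_natCast_lt_one_div_natCast (by omega) (by norm_num)).1 ?_
    push_cast
    linarith
  · refine (one_div_natCast_lt_one_div_natCast (by omega) (by norm_num)).1 ?_
    push_cast
    linarith
  · refine (one_div_natCast_le_one_div_natCast (by omega) (by norm_num)).1 ?_
    push_cast
    linarith

lemma solutions_of_bounds {q₀ q₁ q₂ p : ℕ} (hq₀ : 4 ≤ q₀) (h₀₁ : q₀ < q₁) (h₁₂ : q₁ < q₂)
    (he₀ : Even q₀) (he₁ : Even q₁) (he₂ : Even q₂) (hd₂ : q₂ ∣ p)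
    (hb₀ : q₀ < 8) (hb₁ : q₁ < 12) (hb₂ : q₂ ≤ 24)
    (h : 2 * (q₁ * q₂ * p + q₀ * q₂ * p + q₀ * q₁ * p + q₀ * q₁ * q₂) = q₀ * q₁ * q₂ * p) :
    (q₀ = 4 ∧ q₁ = 6 ∧ q₂ = 14 ∧ p = 84) ∨
      (q₀ = 4 ∧ q₁ = 6 ∧ q₂ = 16 ∧ p = 48) ∨
      (q₀ = 4 ∧ q₁ = 6 ∧ q₂ = 18 ∧ p = 36) ∨
      (q₀ = 4 ∧ q₁ = 6 ∧ q₂ = 24 ∧ p = 24) ∨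
      (q₀ = 4 ∧ q₁ = 8 ∧ q₂ = 10 ∧ p = 40) ∨
      (q₀ = 4 ∧ q₁ = 8 ∧ q₂ = 12 ∧ p = 24) ∨
      (q₀ = 4 ∧ q₁ = 8 ∧ q₂ = 16 ∧ p = 16) := by
  obtain ⟨a, rfl⟩ := he₀
  obtain ⟨b, rfl⟩ := he₁
  obtain ⟨c, rfl⟩ := he₂
  obtain ⟨ha₁, ha₂⟩ : 2 ≤ a ∧ a ≤ 3 := by omega
  obtain ⟨hb₁, hb₂⟩ : 3 ≤ b ∧ b ≤ 5 := by omega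
  obtain ⟨hc₁, hc₂⟩ : 4 ≤ c ∧ c ≤ 12 := by omega
  interval_cases a <;> interval_cases b <;> interval_cases c <;> omega

theorem stmt_9_general (q₀ q₁ q₂ p : ℕ) (hq₀ : 4 ≤ q₀) (h₀₁ : q₀ < q₁) (h₁₂ : q₁ < q₂)
    (he₀ : Even q₀) (he₁ : Even q₁) (he₂ : Even q₂) (hp : 4 ≤ p)
    (hd₂ : q₂ ∣ p) :
    (1 : ℚ) / (q₀ : ℚ) + 1 / (q₁ : ℚ) + 1 / (q₂ : ℚ) + 1 / (p : ℚ) = 1 / 2 ↔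
      (q₀ = 4 ∧ q₁ = 6 ∧ q₂ = 14 ∧ p = 84) ∨
      (q₀ = 4 ∧ q₁ = 6 ∧ q₂ = 16 ∧ p = 48) ∨
      (q₀ = 4 ∧ q₁ = 6 ∧ q₂ = 18 ∧ p = 36) ∨
      (q₀ = 4 ∧ q₁ = 6 ∧ q₂ = 24 ∧ p = 24) ∨
      (q₀ = 4 ∧ q₁ = 8 ∧ q₂ = 10 ∧ p = 40) ∨
      (q₀ = 4 ∧ q₁ = 8 ∧ q₂ = 12 ∧ p = 24) ∨
      (q₀ = 4 ∧ q₁ = 8 ∧ q₂ = 16 ∧ p = 16) := by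
  have hq₁ : 6 ≤ q₁ := by
    obtain ⟨k, rfl⟩ := he₁
    omega
  have h₂p : q₂ ≤ p := Nat.le_of_dvd (by omega) hd₂
  constructor
  · intro h
    obtain ⟨hb₀, hb₁, hb₂⟩ := bounds_of_one_div_add_four_eq_half hq₀ hq₁ h₀₁ h₁₂ h₂p h
    rw [one_div_add_four_eq_half_iff (by omega) (by omega) (by omega) (by omega)] at h
    exact solutions_of_bounds hq₀ h₀₁ h₁₂ he₀ he₁ he₂ hd₂ hb₀ hb₁ hb₂ h
  · rintro (⟨rfl, rfl, rfl, rfl⟩ | ⟨rfl, rfl, rfl, rfl⟩ | ⟨rfl, rfl, rfl, rfl⟩ | ⟨rfl, rfl, rfl, rfl⟩ |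
      ⟨rfl, rfl, rfl, rfl⟩ | ⟨rfl, rfl, rfl, rfl⟩ | ⟨rfl, rfl, rfl, rfl⟩) <;> norm_num

theorem stmt_9 (q₀ q₁ q₂ p : ℕ) (hq₀ : 4 ≤ q₀) (h₀₁ : q₀ < q₁) (h₁₂ : q₁ < q₂)
    (he₀ : Even q₀) (he₁ : Even q₁) (he₂ : Even q₂) (hp : 4 ≤ p) (hpe : Even p)
    (hd₀ : q₀ ∣ p) (hd₁ : q₁ ∣ p) (hd₂ : q₂ ∣ p) :
    (1 : ℚ) / (q₀ : ℚ) + 1 / (q₁ : ℚ) + 1 / (q₂ : ℚ) + 1 / (p : ℚ) = 1 / 2 ↔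
      (q₀ = 4 ∧ q₁ = 6 ∧ q₂ = 14 ∧ p = 84) ∨
      (q₀ = 4 ∧ q₁ = 6 ∧ q₂ = 16 ∧ p = 48) ∨
      (q₀ = 4 ∧ q₁ = 6 ∧ q₂ = 18 ∧ p = 36) ∨
      (q₀ = 4 ∧ q₁ = 6 ∧ q₂ = 24 ∧ p = 24) ∨
      (q₀ = 4 ∧ q₁ = 8 ∧ q₂ = 10 ∧ p = 40) ∨
      (q₀ = 4 ∧ q₁ = 8 ∧ q₂ = 12 ∧ p = 24) ∨
      (q₀ = 4 ∧ q₁ = 8 ∧ q₂ = 16 ∧ p = 16) :=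
  stmt_9_general q₀ q₁ q₂ p hq₀ h₀₁ h₁₂ he₀ he₁ he₂ hp hd₂
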